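/- Let (λ_i)_{i≥1} be a sequence in (0,1], (w_i)_{i≥1} nonnegative reals with W := Σ_{i=1}^∞ w_i < ∞, and suppose the spectral measure σ(0,u) := Σ_{i : λ_i < u} w_i satisfies σ(0,u) ≤ M·u^ω for all u ∈ (0, u_0), for some constants M > 0, ω > 0, u_0 ∈ (0,1). Then for all k with (ω·log k)/(2k) < u_0 and k ≥ e, the excess loss satisfies the explicit non-asymptotic bound F(k) := Σ_{i=1}^∞ w_i (1 − λ_i)^{2k} ≤ M·((ω·log k)/(2k))^ω + W·k^{−ω}, obtained by splitting at u = (ω·log k)/(2k). -/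

import Mathlib

/-!
Split the spectrum at `u = ω log k / (2k)`. Eigenvalues below `u` contribute at most their
weight, i.e. at most `σ(0,u) ≤ M u^ω`; each eigenvalue `λ ≥ u` has
`(1 - λ)^(2k) ≤ exp (-2ku) = k^(-ω)`, so these contribute at most `W k^(-ω)`.
-/

open Real

lemma one_sub_pow_le_exp_neg_mul {x u : ℝ} (hx : x ≤ 1) (hux : u ≤ x) (n : ℕ) :
    (1 - x) ^ n ≤ exp (-(n * u)) :=
  calc (1 - x) ^ n ≤ exp (-u) ^ n :=
        pow_le_pow_left₀ (sub_nonneg.2 hx)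
          ((one_sub_le_exp_neg x).trans (exp_le_exp.2 (neg_le_neg hux))) n
    _ = exp (-(n * u)) := by rw [← exp_nat_mul, mul_neg]

lemma one_sub_pow_two_mul_le_rpow_neg {k : ℕ} (hk : 0 < k) {ω x : ℝ} (hx : x ≤ 1)
    (hux : ω * log k / (2 * k) ≤ x) : (1 - x) ^ (2 * k) ≤ (k : ℝ) ^ (-ω) := by
  have hk' : (0 : ℝ) < k := Nat.cast_pos.2 hk
  have hexp : exp (-((2 * k : ℕ) * (ω * log k / (2 * k)))) = (k : ℝ) ^ (-ω) := by
    rw [rpow_def_of_pos hk']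
    congr 1
    push_cast
    field_simp
  exact hexp ▸ one_sub_pow_le_exp_neg_mul hx hux (2 * k)

lemma tsum_mul_le_tsum_subtype_add_tsum_mul {ι : Type*} {w f : ι → ℝ} (p : ι → Prop)
    {ε : ℝ} (hw : ∀ i, 0 ≤ w i) (hsum : Summable w) (hf₀ : ∀ i, 0 ≤ f i) (hf₁ : ∀ i, f i ≤ 1)
    (hε₀ : 0 ≤ ε) (hε : ∀ i, ¬ p i → f i ≤ ε) :
    ∑' i, w i * f i ≤ ∑' i : {i // p i}, w i + (∑' i, w i) * ε := by
  have hle_w : ∀ i, w i * f i ≤ w i := fun i => mul_le_of_le_one_right (hw i) (hf₁ i)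
  have hwf : Summable fun i => w i * f i :=
    hsum.of_nonneg_of_le (fun i => mul_nonneg (hw i) (hf₀ i)) hle_w
  rw [← (hwf.subtype _).tsum_add_tsum_compl (s := {i | p i}) (hwf.subtype _)]
  gcongr
  · exact (hwf.subtype _).tsum_le_tsum (fun i => hle_w i) (hsum.subtype _)
  · calc ∑' i : ↥{i | p i}ᶜ, w i * f i ≤ ∑' i : ↥{i | p i}ᶜ, w i * ε :=
          (hwf.subtype _).tsum_le_tsum (fun i => mul_le_mul_of_nonneg_left (hε i i.2) (hw i))
            ((hsum.mul_right ε).subtype _)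
      _ = (∑' i : ↥{i | p i}ᶜ, w i) * ε := tsum_mul_right
      _ ≤ (∑' i, w i) * ε := by
          gcongr
          exact hsum.tsum_subtype_le w _ hw

theorem nonasymptotic_scaling_bound_general
    (lam w : ℕ → ℝ)
    (hlam : ∀ i, lam i ∈ Set.Ioc (0 : ℝ) 1)
    (hw : ∀ i, 0 ≤ w i) (hsum : Summable w)
    (M ω u₀ : ℝ) (hω : 0 < ω)
    (hσ : ∀ u ∈ Set.Ioo (0 : ℝ) u₀,
      (∑' i : {i : ℕ // lam i < u}, w i) ≤ M * u ^ ω) :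
    ∀ k : ℕ, (ω * Real.log k) / (2 * k) < u₀ → Real.exp 1 ≤ (k : ℝ) →
      (∑' i : ℕ, w i * (1 - lam i) ^ (2 * k)) ≤
        M * ((ω * Real.log k) / (2 * k)) ^ ω + (∑' i : ℕ, w i) * (k : ℝ) ^ (-ω) := by
  intro k hku he
  have hk : (1 : ℝ) < k := (one_lt_exp_iff.2 one_pos).trans_le he
  have hk₀ : 0 < k := by exact_mod_cast one_pos.trans hk
  have hlogk : 0 < log k := log_pos hk
  set u := ω * log k / (2 * k)
  have hu : 0 < u := by positivity
  calc ∑' i, w i * (1 - lam i) ^ (2 * k)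
      ≤ ∑' i : {i // lam i < u}, w i + (∑' i, w i) * (k : ℝ) ^ (-ω) :=
        tsum_mul_le_tsum_subtype_add_tsum_mul (fun i => lam i < u) hw hsum
          (fun i => pow_nonneg (sub_nonneg.2 (hlam i).2) _)
          (fun i => pow_le_one₀ (sub_nonneg.2 (hlam i).2) (by linarith [(hlam i).1]))
          (by positivity)
          (fun i hi => one_sub_pow_two_mul_le_rpow_neg hk₀ (hlam i).2 (not_lt.1 hi))
    _ ≤ M * u ^ ω + (∑' i, w i) * (k : ℝ) ^ (-ω) := by gcongr; exact hσ u ⟨hu, hku⟩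

/-- **non-asymptotic infinite-dimensional scaling law.** For eigenvalues
`λ i ∈ (0,1]` and summable nonnegative weights `w i` with total mass `W = ∑' i, w i`,
if the spectral measure satisfies `σ(0,u) = ∑_{i : λ i < u} w i ≤ M·u^ω` for all
`u ∈ (0, u₀)`, then for all `k` with `(ω·log k)/(2k) < u₀` and `k ≥ e`, splitting at
`u = (ω·log k)/(2k)` gives
`F(k) = ∑' i, w i (1 - λ i)^(2k) ≤ M·((ω·log k)/(2k))^ω + W·k^(-ω)`. -/
theorem nonasymptotic_scaling_bound
    (lam w : ℕ → ℝ)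
    (hlam : ∀ i, lam i ∈ Set.Ioc (0 : ℝ) 1)
    (hw : ∀ i, 0 ≤ w i) (hsum : Summable w)
    (M ω u₀ : ℝ) (hM : 0 < M) (hω : 0 < ω) (hu₀ : u₀ ∈ Set.Ioo (0 : ℝ) 1)
    (hσ : ∀ u ∈ Set.Ioo (0 : ℝ) u₀,
      (∑' i : {i : ℕ // lam i < u}, w i) ≤ M * u ^ ω) :
    ∀ k : ℕ, (ω * Real.log k) / (2 * k) < u₀ → Real.exp 1 ≤ (k : ℝ) →
      (∑' i : ℕ, w i * (1 - lam i) ^ (2 * k)) ≤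
        M * ((ω * Real.log k) / (2 * k)) ^ ω + (∑' i : ℕ, w i) * (k : ℝ) ^ (-ω) :=
  nonasymptotic_scaling_bound_general lam w hlam hw hsum M ω u₀ hω hσ
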